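/- arXiv:2402.10780 — 2 statements merged into one kernel-verified Lean document; each statement's English description precedes it below -/
import Mathlib

section
/- For q > 0, the union over k = (k₁,k₂) ∈ (-π,π]² of the eigenvalues of the Hermitian matrix H(k) with H₁₁ = 3+q, H₂₂ = 3-q, H₁₂ = -(1 + e^{ik₁} + e^{-ik₂}), H₂₁ = conj(H₁₂) equals [3 - √(9+q²), 3-q] ∪ [3+q, 3+√(9+q²)]. -/
open Real Complex
open scoped ComplexConjugate

/-! The eigenvalues `x` of `H(k)` are the real roots of `(x - 3)² = q² + f(k)`, so the spectrum is
determined by the range of `f` over the Brillouin zone. That range is `[0, 9]`: `f ≤ 9` by the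
triangle inequality, and already on the diagonal `f(s, s) = (1 + 2 cos s)²` sweeps `[0, 9]`. -/

theorem Matrix.mem_spectrum_fin_two_iff {K : Type*} [Field K] (a b c d x : K) :
    x ∈ spectrum K !![a, b; c, d] ↔ (x - a) * (x - d) - b * c = 0 := by
  rw [spectrum.mem_iff, Matrix.isUnit_iff_isUnit_det, isUnit_iff_ne_zero, not_not,
    Matrix.det_fin_two]
  simp [Matrix.algebraMap_matrix_apply]

theorem ofReal_mem_spectrum_fin_two_iff (a b x : ℝ) (w : ℂ) :
    (x : ℂ) ∈ spectrum ℂ !![(a : ℂ), w; conj w, (b : ℂ)] ↔ (x - a) * (x - b) = normSq w := by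
  rw [Matrix.mem_spectrum_fin_two_iff, mul_conj, sub_eq_zero]
  exact_mod_cast Iff.rfl

theorem sub_sq_sub_sq_mem_Icc_iff {c m q x : ℝ} (hm : 0 ≤ m) (hq : 0 ≤ q) :
    (x - c) ^ 2 - q ^ 2 ∈ Set.Icc 0 m ↔
      x ∈ Set.Icc (c - √(m + q ^ 2)) (c - q) ∪ Set.Icc (c + q) (c + √(m + q ^ 2)) := by
  have hr : √(m + q ^ 2) ^ 2 = m + q ^ 2 := Real.sq_sqrt (by positivity)
  have hr0 : 0 ≤ √(m + q ^ 2) := Real.sqrt_nonneg _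
  simp only [Set.mem_union, Set.mem_Icc]
  rcases le_total x c with hx | hx
  · constructor
    · rintro ⟨h1, h2⟩; left; constructor <;> nlinarith
    · rintro (⟨h1, h2⟩ | ⟨h1, h2⟩) <;> constructor <;> nlinarith
  · constructor
    · rintro ⟨h1, h2⟩; right; constructor <;> nlinarith
    · rintro (⟨h1, h2⟩ | ⟨h1, h2⟩) <;> constructor <;> nlinarith

/-- `normSq (hexagonalSymbol k₁ k₂)` is the paper's `f(k)`. -/
noncomputable def hexagonalSymbol (k₁ k₂ : ℝ) : ℂ :=
  1 + exp (I * k₁) + exp (-(I * k₂))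

theorem conj_hexagonalSymbol (k₁ k₂ : ℝ) :
    conj (hexagonalSymbol k₁ k₂) = 1 + exp (-(I * k₁)) + exp (I * k₂) := by
  simp only [hexagonalSymbol, map_add, map_one, ← exp_conj, map_mul, map_neg, conj_I,
    conj_ofReal, neg_mul, neg_neg]

theorem normSq_hexagonalSymbol_le (k₁ k₂ : ℝ) : normSq (hexagonalSymbol k₁ k₂) ≤ 9 := by
  have hnorm : ‖hexagonalSymbol k₁ k₂‖ ≤ 3 :=
    calc ‖hexagonalSymbol k₁ k₂‖ ≤ ‖(1 : ℂ)‖ + ‖exp (I * k₁)‖ + ‖exp (-(I * k₂))‖ :=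
          norm_add₃_le
      _ = 3 := by
          rw [norm_one, mul_comm, norm_exp_ofReal_mul_I, ← mul_neg, mul_comm, ← ofReal_neg,
            norm_exp_ofReal_mul_I]
          norm_num
  rw [← Complex.sq_norm]
  nlinarith [norm_nonneg (hexagonalSymbol k₁ k₂)]

theorem hexagonalSymbol_self (s : ℝ) : hexagonalSymbol s s = ((1 + 2 * Real.cos s : ℝ) : ℂ) := by
  rw [hexagonalSymbol, mul_comm, ← neg_mul, ← ofReal_neg, exp_mul_I, exp_mul_I]
  push_cast
  rw [Complex.cos_neg, Complex.sin_neg]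
  ring

theorem normSq_hexagonalSymbol_image :
    (fun k : ℝ × ℝ => normSq (hexagonalSymbol k.1 k.2)) ''
      (Set.Ioc (-π) π ×ˢ Set.Ioc (-π) π) = Set.Icc 0 9 := by
  refine subset_antisymm ?_ fun t ht => ?_
  · rintro _ ⟨k, -, rfl⟩
    exact ⟨normSq_nonneg _, normSq_hexagonalSymbol_le k.1 k.2⟩
  have hpi := Real.pi_gt_three
  have hcos : (1 + 2 * Real.cos (2 * π / 3)) ^ 2 = 0 := by
    rw [show 2 * π / 3 = π - π / 3 by ring, Real.cos_pi_sub, Real.cos_pi_div_three]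
    norm_num
  obtain ⟨s, ⟨hs0, hs1⟩, hst⟩ := intermediate_value_Icc' (by linarith : 0 ≤ 2 * π / 3)
    (by fun_prop : ContinuousOn (fun s => (1 + 2 * Real.cos s) ^ 2) _)
    (by rwa [hcos, Real.cos_zero, show (1 + 2 * 1 : ℝ) ^ 2 = 9 by norm_num])
  refine ⟨(s, s), ⟨⟨by linarith, by linarith⟩, by linarith, by linarith⟩, ?_⟩
  simp only [← hst, hexagonalSymbol_self, normSq_ofReal, sq]

/-- The union over `k ∈ (-π,π]²` of the eigenvalues of the hexagonal-lattice fiber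
operator `H(k)` equals `[3-√(9+q²), 3-q] ∪ [3+q, 3+√(9+q²)]`. -/
theorem spectrum_hexagonal_lattice (q : ℝ) (hq : 0 < q) :
    (⋃ k ∈ Set.Ioc (-π) π ×ˢ Set.Ioc (-π) π,
        {x : ℝ | (x : ℂ) ∈ spectrum ℂ
          (!![((3 : ℝ) + q : ℂ),
              -(1 + Complex.exp (Complex.I * (k.1 : ℝ)) +
                Complex.exp (-(Complex.I * (k.2 : ℝ))));
              -(1 + Complex.exp (-(Complex.I * (k.1 : ℝ))) +
                Complex.exp (Complex.I * (k.2 : ℝ))), ((3 : ℝ) - q : ℂ)])}) =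
      Set.Icc (3 - Real.sqrt (9 + q ^ 2)) (3 - q) ∪
        Set.Icc (3 + q) (3 + Real.sqrt (9 + q ^ 2)) := by
  ext x
  have hmem (k : ℝ × ℝ) : (x : ℂ) ∈ spectrum ℂ
      !![((3 : ℝ) + q : ℂ), -(1 + exp (I * (k.1 : ℝ)) + exp (-(I * (k.2 : ℝ))));
        -(1 + exp (-(I * (k.1 : ℝ))) + exp (I * (k.2 : ℝ))), ((3 : ℝ) - q : ℂ)] ↔
      normSq (hexagonalSymbol k.1 k.2) = (x - 3) ^ 2 - q ^ 2 := by
    rw [← conj_hexagonalSymbol, ← hexagonalSymbol, ← map_neg (starRingEnd ℂ), ← ofReal_add,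
      ← ofReal_sub, ofReal_mem_spectrum_fin_two_iff, normSq_neg]
    constructor <;> intro h <;> linarith
  simp only [Set.mem_iUnion, Set.mem_ofPred_eq, hmem, exists_prop]
  rw [← sub_sq_sub_sq_mem_Icc_iff (by norm_num) hq.le, ← normSq_hexagonalSymbol_image]
  rfl
end

section
/- Let t ∈ ℤ with t ≡ 1 (mod 3), and define g : ℝ → ℝ by g(k) = 3 + 2cos k + 2cos(tk) + 2cos((t+1)k). Then the minimum of g over ℝ is 0, attained at k = 2π/3. -/
open Real

/-!
The symbol is `|1 + e^{ik} + e^{-itk}|² = (1 + cos k + cos tk)² + (sin k - sin tk)²`,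
hence nonnegative. At `k = 2π/3` the three angles `k`, `tk`, `(t+1)k` are nonzero multiples of
`2π/3` modulo `2π`, because `t ≡ 1` and `t + 1 ≡ 2 (mod 3)`, so each cosine equals `-1/2`.
-/

lemma three_add_two_cos_add_eq_sq_add_sq (a b : ℝ) :
    3 + 2 * cos a + 2 * cos b + 2 * cos (a + b) =
      (1 + cos a + cos b) ^ 2 + (sin a - sin b) ^ 2 := by
  rw [cos_add]
  nlinarith [sin_sq_add_cos_sq a, sin_sq_add_cos_sq b]

lemma cos_two_pi_div_three : cos (2 * π / 3) = -(1 / 2) := by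
  rw [show 2 * π / 3 = π - π / 3 by ring, cos_pi_sub, cos_pi_div_three]

lemma cos_int_mul_two_pi_div_three {n : ℤ} (hn : ¬ (3 : ℤ) ∣ n) :
    cos (n * (2 * π / 3)) = -(1 / 2) := by
  have hdecomp :
      (n : ℝ) * (2 * π / 3) = (n % 3 : ℤ) * (2 * π / 3) + (n / 3 : ℤ) * (2 * π) := by
    have : (n : ℝ) = (n % 3 : ℤ) + 3 * (n / 3 : ℤ) := by
      exact_mod_cast (show n = n % 3 + 3 * (n / 3) by omega)
    rw [this]; ring
  rw [hdecomp, cos_add_int_mul_two_pi]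
  have hr : n % 3 = 1 ∨ n % 3 = 2 := by omega
  rcases hr with h | h <;> rw [h]
  · simpa using cos_two_pi_div_three
  · rw [show ((2 : ℤ) : ℝ) * (2 * π / 3) = -(2 * π / 3) + (1 : ℤ) * (2 * π) by
        push_cast; ring, cos_add_int_mul_two_pi, cos_neg, cos_two_pi_div_three]

/-- For `t ≡ 1 (mod 3)`, the function
`g(k) = 3 + 2cos k + 2cos(tk) + 2cos((t+1)k)` has minimum `0` over `ℝ`, attained at
`k = 2π/3`. -/
theorem perturbed_1d_symbol_min (t : ℤ) (ht : (3 : ℤ) ∣ (t - 1))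
    (g : ℝ → ℝ)
    (hg : ∀ k, g k = 3 + 2 * Real.cos k + 2 * Real.cos ((t : ℝ) * k) +
      2 * Real.cos (((t : ℝ) + 1) * k)) :
    IsLeast (Set.range g) 0 ∧ g (2 * π / 3) = 0 := by
  have hnonneg : ∀ k, 0 ≤ g k := fun k => by
    rw [hg, show ((t : ℝ) + 1) * k = k + t * k by ring, three_add_two_cos_add_eq_sq_add_sq]
    positivity
  have hzero : g (2 * π / 3) = 0 := by
    have hcos_t : cos (t * (2 * π / 3)) = -(1 / 2) := cos_int_mul_two_pi_div_three (by omega)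
    have hcos_t1 : cos (((t : ℝ) + 1) * (2 * π / 3)) = -(1 / 2) := by
      exact_mod_cast cos_int_mul_two_pi_div_three (n := t + 1) (by omega)
    rw [hg, cos_two_pi_div_three, hcos_t, hcos_t1]
    norm_num
  exact ⟨⟨⟨_, hzero⟩, Set.forall_mem_range.2 hnonneg⟩, hzero⟩
end
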